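/- Let n ∈ ℕ, let p, q be real parameters with q > −1, and let δ, ε, τ ∈ ℂ with Re(δ) > 0 and Re(τ+ε) > 0. Then for x > 0, the left-sided Erdélyi–Kober fractional integral satisfies (I⁺_{ε,δ} t^{τ−1} M_n^{(p,q)}(t))(x) = (−1)^n Γ(1+q+n) Γ(τ+ε) / [Γ(1+q) Γ(τ+δ+ε)] · x^{τ−1} · ₃F₂(1+n−p, −n, τ+ε; 1+q, τ+δ+ε; −x). -/

import Mathlib

open MeasureTheory

/-- Pochhammer symbol `(a)_n = a (a+1) ⋯ (a+n−1)`. -/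
noncomputable def poch (a : ℂ) (n : ℕ) : ℂ := ∏ i ∈ Finset.range n, (a + i)

/-- Generalized hypergeometric function `ₚF_q(a₁,…,a_p; c₁,…,c_q; x)`. -/
noncomputable def genHyp (as cs : List ℂ) (x : ℂ) : ℂ :=
  ∑' k : ℕ, ((as.map (fun a => poch a k)).prod / (cs.map (fun c => poch c k)).prod)
    * x ^ k / (Nat.factorial k)

/-- Appell's double hypergeometric function `F₃(a,a′,b,b′;c;x,y)`. -/
noncomputable def appellF3 (a a' b b' c x y : ℂ) : ℂ :=
  ∑' mn : ℕ × ℕ, poch a mn.1 * poch a' mn.2 * poch b mn.1 * poch b' mn.2 /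
    (poch c (mn.1 + mn.2) * (Nat.factorial mn.1) * (Nat.factorial mn.2)) * x ^ mn.1 * y ^ mn.2

/-- Generalized binomial coefficient `binom(a,k) = a(a−1)⋯(a−k+1)/k!`. -/
noncomputable def gbinom (a : ℂ) (k : ℕ) : ℂ := (∏ i ∈ Finset.range k, (a - i)) / (Nat.factorial k)

/-- Jacobi type orthogonal polynomial `M_n^{(p,q)}(x)`. -/
noncomputable def jacobiM (n : ℕ) (p q x : ℂ) : ℂ :=
  (-1) ^ n * (Nat.factorial n) * ∑ k ∈ Finset.range (n + 1),
    gbinom (p - n - 1) k * gbinom (q + n) (n - k) * (-x) ^ k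

/-- Left-sided Marichev–Saigo–Maeda fractional integral operator. -/
noncomputable def msmLeft (δ δ' μ μ' ε : ℂ) (f : ℝ → ℂ) (x : ℝ) : ℂ :=
  (x : ℂ) ^ (-δ) / Complex.Gamma ε *
    ∫ t in Set.Ioo (0 : ℝ) x, ((x - t : ℝ) : ℂ) ^ (ε - 1) * (t : ℂ) ^ (-δ') *
      appellF3 δ δ' μ μ' ε ((1 - t / x : ℝ) : ℂ) ((1 - x / t : ℝ) : ℂ) * f t

/-- Right-sided Marichev–Saigo–Maeda fractional integral operator. -/
noncomputable def msmRight (δ δ' μ μ' ε : ℂ) (f : ℝ → ℂ) (x : ℝ) : ℂ :=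
  (x : ℂ) ^ (-δ') / Complex.Gamma ε *
    ∫ t in Set.Ioi x, ((t - x : ℝ) : ℂ) ^ (ε - 1) * (t : ℂ) ^ (-δ) *
      appellF3 δ δ' μ μ' ε ((1 - t / x : ℝ) : ℂ) ((1 - x / t : ℝ) : ℂ) * f t

/-- Left-sided Saigo fractional integral operator. -/
noncomputable def saigoLeft (δ μ ε : ℂ) (f : ℝ → ℂ) (x : ℝ) : ℂ :=
  (x : ℂ) ^ (-δ - μ) / Complex.Gamma δ *
    ∫ t in Set.Ioo (0 : ℝ) x, ((x - t : ℝ) : ℂ) ^ (δ - 1) *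
      genHyp [δ + μ, -ε] [δ] ((1 - t / x : ℝ) : ℂ) * f t

/-- Right-sided Saigo fractional integral operator. -/
noncomputable def saigoRight (δ μ ε : ℂ) (f : ℝ → ℂ) (x : ℝ) : ℂ :=
  (1 / Complex.Gamma δ) *
    ∫ t in Set.Ioi x, ((t - x : ℝ) : ℂ) ^ (δ - 1) * (t : ℂ) ^ (-δ - μ) *
      genHyp [δ + μ, -ε] [δ] ((1 - x / t : ℝ) : ℂ) * f t

/-- Left-sided Riemann–Liouville fractional integral operator. -/
noncomputable def rlLeft (δ : ℂ) (f : ℝ → ℂ) (x : ℝ) : ℂ :=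
  (1 / Complex.Gamma δ) * ∫ t in Set.Ioo (0 : ℝ) x, ((x - t : ℝ) : ℂ) ^ (δ - 1) * f t

/-- Right-sided Riemann–Liouville fractional integral operator. -/
noncomputable def rlRight (δ : ℂ) (f : ℝ → ℂ) (x : ℝ) : ℂ :=
  (1 / Complex.Gamma δ) * ∫ t in Set.Ioi x, ((t - x : ℝ) : ℂ) ^ (δ - 1) * f t

/-- Left-sided Erdélyi–Kober fractional integral operator `I⁺_{ε,δ}`. -/
noncomputable def ekLeft (ε δ : ℂ) (f : ℝ → ℂ) (x : ℝ) : ℂ :=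
  (x : ℂ) ^ (-δ - ε) / Complex.Gamma δ *
    ∫ t in Set.Ioo (0 : ℝ) x, ((x - t : ℝ) : ℂ) ^ (δ - 1) * (t : ℂ) ^ ε * f t

/-- Right-sided Erdélyi–Kober fractional integral operator `K⁻_{ε,δ}`. -/
noncomputable def ekRight (ε δ : ℂ) (f : ℝ → ℂ) (x : ℝ) : ℂ :=
  (x : ℂ) ^ ε / Complex.Gamma δ *
    ∫ t in Set.Ioi x, ((t - x : ℝ) : ℂ) ^ (δ - 1) * (t : ℂ) ^ (-δ - ε) * f t

/-- Left-sided Marichev–Saigo–Maeda fractional derivative operator. -/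
noncomputable def msmDLeft (δ δ' μ μ' ε : ℂ) (f : ℝ → ℂ) (x : ℝ) : ℂ :=
  iteratedDeriv (⌊ε.re⌋ + 1).toNat
    (msmLeft (-δ') (-δ) (-μ' + ((⌊ε.re⌋ + 1 : ℤ) : ℂ)) (-μ) (-ε + ((⌊ε.re⌋ + 1 : ℤ) : ℂ)) f) x

/-- Right-sided Marichev–Saigo–Maeda fractional derivative operator. -/
noncomputable def msmDRight (δ δ' μ μ' ε : ℂ) (f : ℝ → ℂ) (x : ℝ) : ℂ :=
  (-1 : ℂ) ^ (⌊ε.re⌋ + 1).toNat * iteratedDeriv (⌊ε.re⌋ + 1).toNat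
    (msmRight (-δ') (-δ) (-μ') (-μ + ((⌊ε.re⌋ + 1 : ℤ) : ℂ)) (-ε + ((⌊ε.re⌋ + 1 : ℤ) : ℂ)) f) x

/-!
Expanding `M_n^{(p,q)}` in powers of `t`, the Erdélyi–Kober operator acts on each monomial
`t^{τ+k-1}` through a beta integral, producing `Γ(τ+ε+k) / Γ(τ+δ+ε+k) · x^{τ+k-1}`. Writing the
Gamma quotients as Pochhammer symbols, the resulting finite sum is the `₃F₂` series, which
terminates at `k = n` because of the parameter `-n`.
-/

open MeasureTheory Set Polynomial

lemma ascPochhammer_eval_ne_zero {R : Type*} [CommRing R] [IsDomain R] {z : R}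
    (hz : ∀ k : ℕ, z ≠ -k) (n : ℕ) : (ascPochhammer R n).eval z ≠ 0 := by
  rw [Ne, ascPochhammer_eval_eq_zero_iff]
  rintro ⟨k, -, hk⟩
  exact hz k (by rw [hk, neg_neg])

lemma ascPochhammer_eval_eq_mul_of_le {R : Type*} [CommSemiring R] (z : R) {k n : ℕ}
    (hkn : k ≤ n) :
    (ascPochhammer R n).eval z =
      (ascPochhammer R k).eval z * (ascPochhammer R (n - k)).eval (z + k) := by
  obtain ⟨m, rfl⟩ := Nat.exists_eq_add_of_le hkn
  rw [Nat.add_sub_cancel_left, ← ascPochhammer_mul, eval_mul, eval_comp]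
  simp

lemma descPochhammer_eval_eq_neg_one_pow_mul {R : Type*} [CommRing R] (r : R) (k : ℕ) :
    (descPochhammer R k).eval r = (-1) ^ k * (ascPochhammer R k).eval (-r) := by
  rw [ascPochhammer_eval_neg_eq_descPochhammer, ← mul_assoc, ← mul_pow, neg_one_mul, neg_neg,
    one_pow, one_mul]

namespace Complex

lemma forall_ne_neg_natCast_of_re_pos {z : ℂ} (hz : 0 < z.re) : ∀ k : ℕ, z ≠ -k := by
  intro k h
  have : z.re = -k := by simp [h]
  linarith [(Nat.cast_nonneg k : (0 : ℝ) ≤ k)]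

lemma Gamma_add_nat_eq_mul_ascPochhammer_eval {z : ℂ} (hz : ∀ k : ℕ, z ≠ -k) (n : ℕ) :
    Gamma (z + n) = Gamma z * (ascPochhammer ℂ n).eval z := by
  rw [← Gamma_add_nat_div_Gamma_eq z hz, mul_div_cancel₀ _ (Gamma_ne_zero hz)]

lemma integral_cpow_mul_sub_cpow {u v : ℂ} (hu : 0 < u.re) (hv : 0 < v.re) {x : ℝ}
    (hx : 0 < x) :
    ∫ t in (0 : ℝ)..x, (t : ℂ) ^ (u - 1) * ((x : ℂ) - t) ^ (v - 1) =
      (x : ℂ) ^ (u + v - 1) * (Gamma u * Gamma v / Gamma (u + v)) := by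
  have huv : 0 < (u + v).re := by rw [add_re]; positivity
  rw [betaIntegral_scaled u v hx, Gamma_mul_Gamma_eq_betaIntegral hu hv,
    mul_div_cancel_left₀ _ (Gamma_ne_zero_of_re_pos huv)]

-- The beta integral is nonzero, and the integral of a non-integrable function is `0`.
lemma intervalIntegrable_cpow_mul_sub_cpow {u v : ℂ} (hu : 0 < u.re) (hv : 0 < v.re) {x : ℝ}
    (hx : 0 < x) :
    IntervalIntegrable (fun t : ℝ => (t : ℂ) ^ (u - 1) * ((x : ℂ) - t) ^ (v - 1)) volume 0 x := by
  have huv : 0 < (u + v).re := by rw [add_re]; positivity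
  refine intervalIntegral.intervalIntegrable_of_integral_ne_zero ?_
  rw [integral_cpow_mul_sub_cpow hu hv hx]
  refine mul_ne_zero ?_ (div_ne_zero (mul_ne_zero ?_ ?_) (Gamma_ne_zero_of_re_pos huv))
  · exact cpow_ne_zero_iff.mpr (Or.inl (ofReal_ne_zero.mpr hx.ne'))
  all_goals exact Gamma_ne_zero_of_re_pos ‹_›

end Complex

lemma poch_eq_ascPochhammer_eval (a : ℂ) (n : ℕ) : poch a n = (ascPochhammer ℂ n).eval a := by
  induction n with
  | zero => simp [poch]
  | succ n ih => rw [poch, Finset.prod_range_succ, ← poch, ih, ascPochhammer_succ_eval]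

lemma gbinom_eq_descPochhammer_eval (a : ℂ) (k : ℕ) :
    gbinom a k = (descPochhammer ℂ k).eval a / k.factorial := by
  rw [gbinom, descPochhammer_eval_eq_prod_range]

lemma genHyp_eq_sum_range_of_neg_natCast_mem {as : List ℂ} {n : ℕ} (h : -(n : ℂ) ∈ as)
    (cs : List ℂ) (x : ℂ) :
    genHyp as cs x = ∑ k ∈ Finset.range (n + 1),
      (as.map (fun a => poch a k)).prod / (cs.map (fun c => poch c k)).prod * x ^ k /
        k.factorial := by
  refine tsum_eq_sum fun k hk => ?_
  have hnk : n < k := by simpa using hk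
  have hzero : (as.map (fun a => poch a k)).prod = 0 :=
    List.prod_eq_zero (List.mem_map.mpr ⟨_, h, by
      rw [poch_eq_ascPochhammer_eval, ascPochhammer_eval_neg_coe_nat_of_lt hnk]⟩)
  simp [hzero]

lemma jacobiM_eq_sum (n : ℕ) (p q x : ℂ) :
    jacobiM n p q x = ∑ k ∈ Finset.range (n + 1),
      (-1 : ℂ) ^ (n + k) * (ascPochhammer ℂ k).eval (1 + n - p) *
        (ascPochhammer ℂ k).eval (-(n : ℂ)) * (ascPochhammer ℂ (n - k)).eval (1 + q + k) /
          k.factorial * x ^ k := by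
  rw [jacobiM, Finset.mul_sum]
  refine Finset.sum_congr rfl fun k hk => ?_
  have hkn : k ≤ n := Nat.lt_succ_iff.mp (Finset.mem_range.mp hk)
  have h₁ : gbinom (p - n - 1) k =
      (-1) ^ k * (ascPochhammer ℂ k).eval (1 + n - p) / k.factorial := by
    rw [gbinom_eq_descPochhammer_eval, descPochhammer_eval_eq_neg_one_pow_mul]
    ring_nf
  have h₂ : gbinom (q + n) (n - k) =
      (ascPochhammer ℂ (n - k)).eval (1 + q + k) / (n - k).factorial := by
    rw [gbinom_eq_descPochhammer_eval, descPochhammer_eval_eq_ascPochhammer, Nat.cast_sub hkn]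
    ring_nf
  have h₃ : (ascPochhammer ℂ k).eval (-(n : ℂ)) = (-1) ^ k * n.descFactorial k := by
    rw [ascPochhammer_eval_neg_eq_descPochhammer, descPochhammer_eval_eq_descFactorial]
  have h₄ : ((n - k).factorial : ℂ) * n.descFactorial k = n.factorial := by
    exact_mod_cast Nat.factorial_mul_descFactorial hkn
  have : ((n - k).factorial : ℂ) ≠ 0 := mod_cast (n - k).factorial_ne_zero
  rw [h₁, h₂, h₃, ← h₄, neg_pow, pow_add]
  field_simp
  ring

section ErdelyiKober

variable {ε δ : ℂ} {x : ℝ}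

lemma ekLeft_congr {f g : ℝ → ℂ} (h : EqOn f g (Ioo 0 x)) :
    ekLeft ε δ f x = ekLeft ε δ g x := by
  unfold ekLeft
  rw [setIntegral_congr_fun measurableSet_Ioo fun t ht => by rw [h ht]]

lemma ekLeft_const_mul (c : ℂ) (f : ℝ → ℂ) :
    ekLeft ε δ (fun t => c * f t) x = c * ekLeft ε δ f x := by
  unfold ekLeft
  simp_rw [mul_left_comm _ c, integral_const_mul]
  ring

lemma ekLeft_finset_sum {ι : Type*} (s : Finset ι) (f : ι → ℝ → ℂ)
    (hf : ∀ i ∈ s, IntegrableOn (fun t => ((x - t : ℝ) : ℂ) ^ (δ - 1) * (t : ℂ) ^ ε * f i t)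
      (Ioo 0 x)) :
    ekLeft ε δ (fun t => ∑ i ∈ s, f i t) x = ∑ i ∈ s, ekLeft ε δ (f i) x := by
  simp only [ekLeft, Finset.mul_sum]
  rw [integral_finsetSum s hf, Finset.mul_sum]

lemma ekLeft_cpow_integrand_eqOn (s : ℂ) :
    EqOn (fun t : ℝ => ((x - t : ℝ) : ℂ) ^ (δ - 1) * (t : ℂ) ^ ε * (t : ℂ) ^ (s - 1))
      (fun t : ℝ => (t : ℂ) ^ (s + ε - 1) * ((x : ℂ) - t) ^ (δ - 1)) (Ioo 0 x) := by
  intro t ht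
  have ht0 : (t : ℂ) ≠ 0 := Complex.ofReal_ne_zero.mpr ht.1.ne'
  simp only [Complex.ofReal_sub]
  rw [show s + ε - 1 = ε + (s - 1) by ring, Complex.cpow_add _ _ ht0]
  ring

lemma integrableOn_ekLeft_cpow_integrand (hδ : 0 < δ.re) {s : ℂ} (hs : 0 < (s + ε).re)
    (hx : 0 < x) :
    IntegrableOn (fun t : ℝ => ((x - t : ℝ) : ℂ) ^ (δ - 1) * (t : ℂ) ^ ε * (t : ℂ) ^ (s - 1))
      (Ioo 0 x) :=
  IntegrableOn.congr_fun ((intervalIntegrable_iff_integrableOn_Ioo_of_le hx.le).mp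
      (Complex.intervalIntegrable_cpow_mul_sub_cpow hs hδ hx))
    (ekLeft_cpow_integrand_eqOn s).symm measurableSet_Ioo

lemma ekLeft_cpow (hδ : 0 < δ.re) {s : ℂ} (hs : 0 < (s + ε).re) (hx : 0 < x) :
    ekLeft ε δ (fun t => (t : ℂ) ^ (s - 1)) x =
      Complex.Gamma (s + ε) / Complex.Gamma (s + ε + δ) * (x : ℂ) ^ (s - 1) := by
  have hpow : (x : ℂ) ^ (-δ - ε) * (x : ℂ) ^ (s + ε + δ - 1) = (x : ℂ) ^ (s - 1) := by
    rw [← Complex.cpow_add _ _ (Complex.ofReal_ne_zero.mpr hx.ne')]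
    ring_nf
  rw [ekLeft, setIntegral_congr_fun measurableSet_Ioo (ekLeft_cpow_integrand_eqOn s),
    ← integral_Ioc_eq_integral_Ioo, ← intervalIntegral.integral_of_le hx.le,
    Complex.integral_cpow_mul_sub_cpow hs hδ hx, ← hpow]
  field_simp [Complex.Gamma_ne_zero_of_re_pos hδ]

lemma ekLeft_cpow_mul_sum_pow (hδ : 0 < δ.re) {τ : ℂ} (hτ : 0 < (τ + ε).re) (hx : 0 < x)
    (s : Finset ℕ) (a : ℕ → ℂ) :
    ekLeft ε δ (fun t => (t : ℂ) ^ (τ - 1) * ∑ k ∈ s, a k * (t : ℂ) ^ k) x =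
      Complex.Gamma (τ + ε) / Complex.Gamma (τ + δ + ε) * (x : ℂ) ^ (τ - 1) *
        ∑ k ∈ s, a k * ((ascPochhammer ℂ k).eval (τ + ε) /
          (ascPochhammer ℂ k).eval (τ + δ + ε)) * (x : ℂ) ^ k := by
  have hτδε : 0 < (τ + δ + ε).re := by rw [add_right_comm, Complex.add_re]; positivity
  have hre : ∀ k : ℕ, 0 < (τ + k + ε).re := fun k => by
    rw [add_right_comm, Complex.add_re, Complex.natCast_re]; positivity
  have hpow : ∀ {t : ℝ}, 0 < t → ∀ k : ℕ,
      (t : ℂ) ^ (τ + k - 1) = (t : ℂ) ^ (τ - 1) * (t : ℂ) ^ k := fun ht k => by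
    rw [← Complex.cpow_natCast, ← Complex.cpow_add _ _ (Complex.ofReal_ne_zero.mpr ht.ne')]
    ring_nf
  have hterm : ∀ k : ℕ, ekLeft ε δ (fun t => (t : ℂ) ^ (τ + k - 1)) x =
      Complex.Gamma (τ + ε) / Complex.Gamma (τ + δ + ε) * (x : ℂ) ^ (τ - 1) *
        ((ascPochhammer ℂ k).eval (τ + ε) / (ascPochhammer ℂ k).eval (τ + δ + ε) *
          (x : ℂ) ^ k) := by
    intro k
    have hτδε' := Complex.forall_ne_neg_natCast_of_re_pos hτδε
    have := ascPochhammer_eval_ne_zero hτδε' k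
    have := Complex.Gamma_ne_zero hτδε'
    rw [ekLeft_cpow hδ (hre k) hx, hpow hx,
      show τ + k + ε = τ + ε + k by ring, show τ + ε + k + δ = τ + δ + ε + k by ring,
      Complex.Gamma_add_nat_eq_mul_ascPochhammer_eval
        (Complex.forall_ne_neg_natCast_of_re_pos hτ),
      Complex.Gamma_add_nat_eq_mul_ascPochhammer_eval hτδε']
    field_simp
  calc ekLeft ε δ (fun t => (t : ℂ) ^ (τ - 1) * ∑ k ∈ s, a k * (t : ℂ) ^ k) x
      = ekLeft ε δ (fun t => ∑ k ∈ s, a k * (t : ℂ) ^ (τ + k - 1)) x := by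
        refine ekLeft_congr fun t ht => ?_
        simp only [Finset.mul_sum, hpow ht.1]
        exact Finset.sum_congr rfl fun k _ => by ring
    _ = ∑ k ∈ s, a k * ekLeft ε δ (fun t => (t : ℂ) ^ (τ + k - 1)) x := by
        rw [ekLeft_finset_sum]
        · simp_rw [ekLeft_const_mul]
        · exact fun k _ => IntegrableOn.congr_fun
            ((integrableOn_ekLeft_cpow_integrand hδ (hre k) hx).const_mul (a k))
            (fun t _ => by ring) measurableSet_Ioo
    _ = _ := by
        simp_rw [hterm, Finset.mul_sum]
        exact Finset.sum_congr rfl fun k _ => by ring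

end ErdelyiKober

/-- Corollary 3: Erdélyi–Kober left-sided fractional integral of the Jacobi type
polynomial. -/
theorem ekLeft_jacobiM (n : ℕ) (p q : ℝ) (hq : -1 < q) (δ ε τ : ℂ)
    (hδ : 0 < δ.re) (hτ : 0 < (τ + ε).re) (x : ℝ) (hx : 0 < x) :
    ekLeft ε δ (fun t => (t : ℂ) ^ (τ - 1) * jacobiM n p q t) x =
      (-1) ^ n * Complex.Gamma (1 + (q : ℂ) + n) * Complex.Gamma (τ + ε) /
        (Complex.Gamma (1 + (q : ℂ)) * Complex.Gamma (τ + δ + ε)) *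
        (x : ℂ) ^ (τ - 1) *
        genHyp [1 + (n : ℂ) - p, -(n : ℂ), τ + ε]
          [1 + (q : ℂ), τ + δ + ε] (-(x : ℂ)) := by
  have hq' := Complex.forall_ne_neg_natCast_of_re_pos (z := 1 + (q : ℂ)) (by simp; linarith)
  simp only [jacobiM_eq_sum]
  rw [ekLeft_cpow_mul_sum_pow hδ hτ hx,
    genHyp_eq_sum_range_of_neg_natCast_mem (n := n) (by simp), Finset.mul_sum, Finset.mul_sum]
  refine Finset.sum_congr rfl fun k hk => ?_
  have hA := ascPochhammer_eval_ne_zero hq' k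
  have hG := Complex.Gamma_ne_zero hq'
  rw [Complex.Gamma_add_nat_eq_mul_ascPochhammer_eval hq',
    ascPochhammer_eval_eq_mul_of_le _ (Nat.lt_succ_iff.mp (Finset.mem_range.mp hk))]
  simp only [List.map_cons, List.map_nil, List.prod_cons, List.prod_nil, mul_one,
    poch_eq_ascPochhammer_eval, neg_pow (x : ℂ), pow_add]
  field_simp [-ascPochhammer_eval_eq_zero_iff]
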